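/- Let $J_1$ and $J_2$ be closed two-sided ideals of a C*-algebra $A$, and let $a \in A$ be a self-adjoint element. If $a \geq 0$ modulo $J_1$ (i.e., there exists $x_1 \in J_1$ with $a + x_1 \geq 0$) and $a \geq 0$ modulo $J_2$, then $a \geq 0$ modulo $J_1 \cap J_2$. -/
import Mathlib

open Polynomial Filter Topology Unitization Metric

-- scalar multiples stay in a closed two-sided ideal (via approximate units)
lemma aux_smul_mem {A : Type*} [NonUnitalCStarAlgebra A] [PartialOrder A] [StarOrderedRing A]
    (J : TwoSidedIdeal A) (hJ : IsClosed (J : Set A)) (c : ℂ) {x : A} (hx : x ∈ J) :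
    c • x ∈ J := by
  have hau := CStarAlgebra.increasingApproximateUnit (A := A)
  haveI : (CStarAlgebra.approximateUnit A).NeBot := hau.neBot
  have h1 : Tendsto (fun e : A => (c • e) * x) (CStarAlgebra.approximateUnit A) (𝓝 (c • x)) := by
    simpa [smul_mul_assoc] using (hau.tendsto_mul_right x).const_smul c
  have h2 : ∀ᶠ e in CStarAlgebra.approximateUnit A, (c • e) * x ∈ (J : Set A) :=
    Eventually.of_forall fun e => J.mul_mem_left _ _ hx
  exact hJ.mem_of_tendsto h1 h2

lemma aux_aeval_sub_mem {B : Type*} [Ring B] [Algebra ℝ B] (J : TwoSidedIdeal B)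
    {a b : B} (hab : a - b ∈ J) (p : ℝ[X]) : aeval a p - aeval b p ∈ J := by
  have hpow : ∀ n : ℕ, a ^ n - b ^ n ∈ J := by
    intro n
    induction n with
    | zero => simpa using J.zero_mem
    | succ n ih =>
      have h : a ^ (n + 1) - b ^ (n + 1) = (a ^ n - b ^ n) * a + b ^ n * (a - b) := by
        rw [pow_succ a, pow_succ b]; noncomm_ring
      rw [h]
      exact J.add_mem (J.mul_mem_right _ _ ih) (J.mul_mem_left _ _ hab)
  induction p using Polynomial.induction_on with
  | C r => simpa using J.zero_mem
  | add p q hp hq =>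
    have h : aeval a (p + q) - aeval b (p + q)
        = (aeval a p - aeval b p) + (aeval a q - aeval b q) := by
      simp only [map_add]; abel
    rw [h]; exact J.add_mem hp hq
  | monomial n r _ =>
    have h : aeval a (C r * X ^ (n + 1)) - aeval b (C r * X ^ (n + 1))
        = algebraMap ℝ B r * (a ^ (n + 1) - b ^ (n + 1)) := by
      simp [mul_sub]
    rw [h]
    exact J.mul_mem_left _ _ (hpow _)

lemma aux_negPart_mem {B : Type*} [CStarAlgebra B] [Nontrivial B] [PartialOrder B]
    [StarOrderedRing B] (J : TwoSidedIdeal B) (hJ : IsClosed (J : Set B)) {a b : B}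
    (ha : IsSelfAdjoint a) (hb : 0 ≤ b) (hab : a - b ∈ J) : a⁻ ∈ J := by
  have hbsa : IsSelfAdjoint b := .of_nonneg hb
  have hb0 : b⁻ = 0 := (CFC.negPart_eq_zero_iff b hbsa).mpr hb
  have hfc : Continuous (·⁻ : ℝ → ℝ) := by fun_prop
  have key : ∀ ε : ℝ, 0 < ε → ∃ y ∈ (J : Set B), ‖a⁻ - y‖ ≤ ε := by
    intro ε hε
    set M : ℝ := max ‖a‖ ‖b‖ with hM
    obtain ⟨p, hp⟩ := exists_polynomial_near_of_continuousOn (-M) M (·⁻ : ℝ → ℝ)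
      hfc.continuousOn (ε / 2) (by positivity)
    refine ⟨aeval a p - aeval b p, aux_aeval_sub_mem J hab p, ?_⟩
    have hspec_a : ∀ x ∈ spectrum ℝ a, x ∈ Set.Icc (-M) M := by
      intro x hx
      have := spectrum.norm_le_norm_of_mem hx
      rw [Real.norm_eq_abs, abs_le] at this
      constructor
      · linarith [this.1, le_max_left ‖a‖ ‖b‖]
      · linarith [this.2, le_max_left ‖a‖ ‖b‖]
    have hspec_b : ∀ x ∈ spectrum ℝ b, x ∈ Set.Icc (-M) M := by
      intro x hx
      have := spectrum.norm_le_norm_of_mem hx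
      rw [Real.norm_eq_abs, abs_le] at this
      constructor
      · linarith [this.1, le_max_right ‖a‖ ‖b‖]
      · linarith [this.2, le_max_right ‖a‖ ‖b‖]
    have ha' : a⁻ = cfc (·⁻ : ℝ → ℝ) a := by
      rw [CFC.negPart_def, cfcₙ_eq_cfc]
    have hb' : cfc (·⁻ : ℝ → ℝ) b = 0 := by
      rw [← cfcₙ_eq_cfc, ← CFC.negPart_def, hb0]
    have hdiff : a⁻ - (aeval a p - aeval b p)
        = cfc (fun x : ℝ => x⁻ - p.eval x) a + cfc (fun x : ℝ => p.eval x - x⁻) b := by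
      rw [cfc_sub _ _ a hfc.continuousOn (Polynomial.continuous p).continuousOn,
        cfc_sub _ _ b (Polynomial.continuous p).continuousOn hfc.continuousOn,
        cfc_polynomial p a, cfc_polynomial p b, ha', hb']
      abel
    rw [hdiff]
    calc ‖cfc (fun x : ℝ => x⁻ - p.eval x) a + cfc (fun x : ℝ => p.eval x - x⁻) b‖
        ≤ ‖cfc (fun x : ℝ => x⁻ - p.eval x) a‖ + ‖cfc (fun x : ℝ => p.eval x - x⁻) b‖ :=
          norm_add_le _ _
      _ ≤ ε / 2 + ε / 2 := by
          gcongr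
          · refine norm_cfc_le (by positivity) fun x hx => ?_
            have := hp x (hspec_a x hx)
            rw [Real.norm_eq_abs]
            rw [abs_sub_comm]
            exact this.le
          · refine norm_cfc_le (by positivity) fun x hx => ?_
            have := hp x (hspec_b x hx)
            rw [Real.norm_eq_abs]
            exact this.le
      _ = ε := by ring
  have : a⁻ ∈ closure (J : Set B) := by
    rw [Metric.mem_closure_iff]
    intro ε hε
    obtain ⟨y, hy, hny⟩ := key (ε / 2) (by positivity)
    exact ⟨y, hy, by rw [dist_eq_norm]; linarith⟩
  rwa [hJ.closure_eq] at this

lemma aux_negPart_mem' {A : Type*} [NonUnitalCStarAlgebra A] [PartialOrder A] [StarOrderedRing A]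
    (J : TwoSidedIdeal A) (hJ : IsClosed (J : Set A)) {a b : A}
    (ha : IsSelfAdjoint a) (hb : 0 ≤ b) (hab : a - b ∈ J) : a⁻ ∈ J := by
  have hsmul : ∀ (c : ℂ) {x : A}, x ∈ J → c • x ∈ J := fun c {x} hx => aux_smul_mem J hJ c hx
  set S : Set (Unitization ℂ A) := ((↑) : A → Unitization ℂ A) '' (J : Set A) with hS
  have hzero : (0 : Unitization ℂ A) ∈ S := ⟨0, J.zero_mem, by simp⟩
  have hadd : ∀ {x y : Unitization ℂ A}, x ∈ S → y ∈ S → x + y ∈ S := by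
    rintro _ _ ⟨x, hx, rfl⟩ ⟨y, hy, rfl⟩
    exact ⟨x + y, J.add_mem hx hy, inr_add ℂ x y⟩
  have hneg : ∀ {x : Unitization ℂ A}, x ∈ S → -x ∈ S := by
    rintro _ ⟨x, hx, rfl⟩
    exact ⟨-x, J.neg_mem hx, inr_neg ℂ x⟩
  have hmull : ∀ {x y : Unitization ℂ A}, y ∈ S → x * y ∈ S := by
    rintro x _ ⟨y, hy, rfl⟩
    refine ⟨x.fst • y + x.snd * y, J.add_mem (hsmul _ hy) (J.mul_mem_left _ _ hy), ?_⟩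
    rw [inr_add, ← inl_mul_inr, inr_mul, ← add_mul, inl_fst_add_inr_snd_eq]
  have hmulr : ∀ {x y : Unitization ℂ A}, x ∈ S → x * y ∈ S := by
    rintro _ y ⟨x, hx, rfl⟩
    refine ⟨y.fst • x + x * y.snd, J.add_mem (hsmul _ hx) (J.mul_mem_right _ _ hx), ?_⟩
    rw [inr_add, ← inr_mul_inl, inr_mul, ← mul_add, inl_fst_add_inr_snd_eq]
  let J' : TwoSidedIdeal (Unitization ℂ A) := .mk' S hzero hadd hneg hmull hmulr
  have hJ'mem : ∀ x : Unitization ℂ A, x ∈ J' ↔ x ∈ S :=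
    TwoSidedIdeal.mem_mk' S hzero hadd hneg hmull hmulr
  have hJ' : IsClosed (J' : Set (Unitization ℂ A)) := by
    rw [TwoSidedIdeal.coe_mk']
    exact (Unitization.isometry_inr (𝕜 := ℂ) (A := A)).isClosedEmbedding.isClosedMap _ hJ
  have h := aux_negPart_mem J' hJ' (isSelfAdjoint_inr.mpr ha)
    (inr_nonneg_iff.mpr hb)
    (show ((a : Unitization ℂ A) - (b : Unitization ℂ A)) ∈ J' from
      (hJ'mem _).mpr ⟨a - b, hab, inr_sub ℂ a b⟩)
  rw [hJ'mem] at h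
  have hcomm : ((a⁻ : A) : Unitization ℂ A) = ((a : Unitization ℂ A))⁻ := by
    rw [CFC.negPart_def, CFC.negPart_def,
      Unitization.real_cfcₙ_eq_cfc_inr a _ (_root_.negPart_zero),
      cfcₙ_eq_cfc (hf0 := _root_.negPart_zero)]
  obtain ⟨y, hy, hye⟩ := h
  rw [← hcomm] at hye
  rwa [← inr_injective (R := ℂ) hye]

/-- Let `J₁` and `J₂` be closed two-sided ideals of a C*-algebra `A`, and let
`a ∈ A` be a self-adjoint element.  If `a ≥ 0` modulo `J₁` (i.e. there exists `x₁ ∈ J₁` with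
`a + x₁ ≥ 0`) and `a ≥ 0` modulo `J₂`, then `a ≥ 0` modulo `J₁ ∩ J₂`. -/
theorem positivity_mod_intersection_of_ideals
    {A : Type*} [NonUnitalCStarAlgebra A] [PartialOrder A] [StarOrderedRing A]
    (J₁ J₂ : TwoSidedIdeal A)
    (hJ₁ : IsClosed (J₁ : Set A)) (hJ₂ : IsClosed (J₂ : Set A))
    (a : A) (ha : IsSelfAdjoint a)
    (h₁ : ∃ x₁ ∈ J₁, 0 ≤ a + x₁) (h₂ : ∃ x₂ ∈ J₂, 0 ≤ a + x₂) :
    ∃ x, x ∈ J₁ ∧ x ∈ J₂ ∧ 0 ≤ a + x := by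
  obtain ⟨x₁, hx₁, hax₁⟩ := h₁
  obtain ⟨x₂, hx₂, hax₂⟩ := h₂
  have hd₁ : a - (a + x₁) ∈ J₁ := by simpa using J₁.neg_mem hx₁
  have hd₂ : a - (a + x₂) ∈ J₂ := by simpa using J₂.neg_mem hx₂
  have h1 : a⁻ ∈ J₁ := aux_negPart_mem' J₁ hJ₁ ha hax₁ hd₁
  have h2 : a⁻ ∈ J₂ := aux_negPart_mem' J₂ hJ₂ ha hax₂ hd₂
  refine ⟨a⁻, h1, h2, ?_⟩
  have h3 := CFC.posPart_sub_negPart a ha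
  rw [sub_eq_iff_eq_add] at h3
  rw [← h3]
  exact CFC.posPart_nonneg a
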